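/- Let $0 < \alpha < 1$, $p = n/(n+\alpha)$, and let $a$ be an integrable function supported in the cube $Q = Q(x_0, r)$ with $\int a = 0$ and $\int_Q |a(y)|\,dy \le |Q|\cdot w(Q)^{-1/p}$. Then for every positive integer $k$ and every $x \notin 2\sqrt{n}\,Q$, $S_{\alpha, 2^k}(a)(x)^2 \le C \cdot 2^{k(3n+2\alpha)} \cdot \frac{r^{2(n+\alpha)}}{w(Q)^{2/p}} \cdot \frac{1}{|x-x_0|^{2(n+\alpha)}}$, with $C$ depending only on $n$ and $\alpha$. -/

import Mathlib

open MeasureTheory Set Metric ENNReal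

noncomputable section

/-- The axis-parallel cube centered at `x0` with side length `r`. -/
def cube (n : ℕ) (x0 : EuclideanSpace ℝ (Fin n)) (r : ℝ) : Set (EuclideanSpace ℝ (Fin n)) :=
  {x | ∀ i, |x i - x0 i| ≤ r / 2}

/-- The weighted measure `w(E) = ∫_E w`. -/
def wm (n : ℕ) (w : EuclideanSpace ℝ (Fin n) → ℝ) (s : Set (EuclideanSpace ℝ (Fin n))) : ℝ≥0∞ :=
  ∫⁻ x in s, ENNReal.ofReal (w x)

/-- The intrinsic Hölder class 𝒞_α. -/
def holderClass (n : ℕ) (α : ℝ) : Set (EuclideanSpace ℝ (Fin n) → ℝ) :=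
  {φ | Function.support φ ⊆ closedBall 0 1 ∧ (∫ x, φ x = 0) ∧
    ∀ x x', |φ x - φ x'| ≤ ‖x - x'‖ ^ α}

/-- `f * φ_t (x)` where `φ_t(x) = t^{-n} φ(x/t)`. -/
def convDil (n : ℕ) (f φ : EuclideanSpace ℝ (Fin n) → ℝ) (t : ℝ) (x : EuclideanSpace ℝ (Fin n)) : ℝ :=
  ∫ y, f y * ((t ^ n)⁻¹ * φ (t⁻¹ • (x - y)))

/-- `A_α(f)(y,t) = sup_{φ ∈ 𝒞_α} |f * φ_t(y)|`. -/
def intA (n : ℕ) (α : ℝ) (f : EuclideanSpace ℝ (Fin n) → ℝ) (y : EuclideanSpace ℝ (Fin n)) (t : ℝ) : ℝ≥0∞ :=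
  ⨆ φ ∈ holderClass n α, ENNReal.ofReal |convDil n f φ t y|

/-- The intrinsic Littlewood–Paley g-function. -/
def gFun (n : ℕ) (α : ℝ) (f : EuclideanSpace ℝ (Fin n) → ℝ) (x : EuclideanSpace ℝ (Fin n)) : ℝ≥0∞ :=
  (∫⁻ t in Ioi (0 : ℝ), (intA n α f x t) ^ 2 * (ENNReal.ofReal t)⁻¹) ^ (1/2 : ℝ)

/-- The varying-aperture intrinsic square function `S_{α,β}`. -/
def sFun (n : ℕ) (α β : ℝ) (f : EuclideanSpace ℝ (Fin n) → ℝ) (x : EuclideanSpace ℝ (Fin n)) : ℝ≥0∞ :=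
  (∫⁻ t in Ioi (0 : ℝ), ∫⁻ y in ball x (β * t),
      (intA n α f y t) ^ 2 * (ENNReal.ofReal (t ^ (n + 1)))⁻¹) ^ (1/2 : ℝ)

/-- The intrinsic `g^*_λ` function. -/
def gStar (n : ℕ) (α lam : ℝ) (f : EuclideanSpace ℝ (Fin n) → ℝ) (x : EuclideanSpace ℝ (Fin n)) : ℝ≥0∞ :=
  (∫⁻ t in Ioi (0 : ℝ), ∫⁻ y,
      (ENNReal.ofReal (t / (t + ‖x - y‖))) ^ (lam * n) *
        (intA n α f y t) ^ 2 * (ENNReal.ofReal (t ^ (n + 1)))⁻¹) ^ (1/2 : ℝ)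

/-- The `A_1` condition with constant `A`. -/
def isA1 (n : ℕ) (w : EuclideanSpace ℝ (Fin n) → ℝ) (A : ℝ) : Prop :=
  ∀ (x0 : EuclideanSpace ℝ (Fin n)) (r : ℝ), 0 < r →
    (∫ x in cube n x0 r, w x) ≤ A * r ^ n * essInf w (volume.restrict (cube n x0 r))

/-- The `A_q` condition, `q > 1`, with constant `A`. -/
def isAq (n : ℕ) (w : EuclideanSpace ℝ (Fin n) → ℝ) (q A : ℝ) : Prop :=
  ∀ (x0 : EuclideanSpace ℝ (Fin n)) (r : ℝ), 0 < r →
    ((r ^ n)⁻¹ * ∫ x in cube n x0 r, w x) *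
      ((r ^ n)⁻¹ * ∫ x in cube n x0 r, (w x) ^ (-(1 / (q - 1)) : ℝ)) ^ (q - 1) ≤ A

end

/-!
Since `a` has mean zero, `φ_t` may be recentred at `x0`, and the Hölder condition on `φ` gives
`A_α(a)(y,t) ≤ (ρ/t)^α t^{-n} ‖a‖₁`, where `ρ = √n r/2` is the circumradius of `Q`. On the other
hand `A_α(a)(y,t) = 0` as long as `B(y,t)` misses `Q`, which for `y` in the cone of aperture `β`
at `x` holds for all `t ≤ |x - x0| / (4β)`. Integrating the first bound over the remaining part of
the cone gives
`β^n ρ^{2α} ‖a‖₁² ∫_{|x-x0|/(4β)}^∞ t^{-2(n+α)-1} dt ≲ β^{3n+2α} ρ^{2α} ‖a‖₁² / |x-x0|^{2(n+α)}`,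
and the size condition on the atom bounds `‖a‖₁`.
-/

section

variable {n : ℕ}

lemma cube_subset_closedBall (x0 : EuclideanSpace ℝ (Fin n)) {r : ℝ} (hr : 0 ≤ r) :
    cube n x0 r ⊆ closedBall x0 (√n * (r / 2)) := by
  intro z hz
  rw [mem_closedBall, dist_eq_norm, EuclideanSpace.norm_eq]
  calc √(∑ i, ‖(z - x0) i‖ ^ 2) ≤ √(∑ _i : Fin n, (r / 2) ^ 2) := by
        gcongr with i
        simpa using hz i
    _ = √n * (r / 2) := by
        rw [Finset.sum_const, Finset.card_univ, Fintype.card_fin, nsmul_eq_mul,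
          Real.sqrt_mul n.cast_nonneg, Real.sqrt_sq (by positivity)]

lemma sqrt_mul_lt_norm_sub_of_notMem_cube {x x0 : EuclideanSpace ℝ (Fin n)} {r : ℝ}
    (hx : x ∉ cube n x0 (2 * √n * r)) : √n * r < ‖x - x0‖ := by
  obtain ⟨i, hi⟩ : ∃ i, √n * r < |x i - x0 i| := by
    by_contra! h
    exact hx fun i => (h i).trans_eq (by ring)
  calc √n * r < |x i - x0 i| := hi
    _ = ‖(x - x0) i‖ := by simp
    _ ≤ ‖x - x0‖ := PiLp.norm_apply_le _ i

end

section

variable {n : ℕ} {α ρ t : ℝ} {f φ : EuclideanSpace ℝ (Fin n) → ℝ} {x0 y : EuclideanSpace ℝ (Fin n)}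

lemma abs_convDil_le (hα : 0 ≤ α) (hρ : 0 ≤ ρ) (hf : Integrable f)
    (hsupp : Function.support f ⊆ closedBall x0 ρ) (hmean : ∫ z, f z = 0)
    (hφ : φ ∈ holderClass n α) (ht : 0 < t) :
    |convDil n f φ t y| ≤ ρ ^ α * (∫ z, |f z|) * t ^ (-((n : ℝ) + α)) := by
  set c := ρ ^ α * t ^ (-((n : ℝ) + α)) with hc_def
  have hc : 0 ≤ c := by positivity
  have hc_eq : (t ^ n)⁻¹ * (ρ / t) ^ α = c := by
    rw [hc_def, Real.div_rpow hρ ht.le, Real.rpow_neg ht.le, Real.rpow_add ht, Real.rpow_natCast]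
    field_simp
  have hbound : ∀ z, |f z * ((t ^ n)⁻¹ * (φ (t⁻¹ • (y - z)) - φ (t⁻¹ • (y - x0))))| ≤
      |f z| * c := by
    intro z
    by_cases hz : f z = 0
    · simp [hz]
    have hzρ : ‖z - x0‖ ≤ ρ := mem_closedBall_iff_norm.1 (hsupp hz)
    have hshift : ‖t⁻¹ • (y - z) - t⁻¹ • (y - x0)‖ = ‖z - x0‖ / t := by
      rw [← smul_sub, _root_.sub_sub_sub_cancel_left, norm_smul, norm_inv,
        Real.norm_of_nonneg ht.le, inv_mul_eq_div, norm_sub_rev]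
    rw [abs_mul, abs_mul, abs_of_pos (by positivity : (0 : ℝ) < (t ^ n)⁻¹), ← hc_eq]
    gcongr
    calc |φ (t⁻¹ • (y - z)) - φ (t⁻¹ • (y - x0))| ≤ (‖z - x0‖ / t) ^ α := hshift ▸ hφ.2.2 _ _
      _ ≤ (ρ / t) ^ α := by gcongr
  by_cases hI : Integrable (fun z => f z * ((t ^ n)⁻¹ * φ (t⁻¹ • (y - z))))
  · -- the mean of `f` vanishes, so `φ` may be recentred at `(y - x0) / t`
    have hcentre : convDil n f φ t y =
        ∫ z, f z * ((t ^ n)⁻¹ * (φ (t⁻¹ • (y - z)) - φ (t⁻¹ • (y - x0)))) := by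
      simp_rw [mul_sub]
      rw [integral_sub hI (hf.mul_const _), integral_mul_const, hmean, zero_mul, sub_zero,
        convDil]
    calc |convDil n f φ t y| ≤ ∫ z, |f z| * c := by
          rw [hcentre, ← Real.norm_eq_abs]
          exact norm_integral_le_of_norm_le (hf.abs.mul_const c) (.of_forall hbound)
      _ = ρ ^ α * (∫ z, |f z|) * t ^ (-((n : ℝ) + α)) := by
          rw [integral_mul_const]; ring
  · rw [convDil, integral_undef hI, abs_zero]
    exact mul_nonneg (mul_nonneg (by positivity) (integral_nonneg fun _ => abs_nonneg _))
      (by positivity)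

lemma convDil_eq_zero_of_lt_norm_sub (hsupp : Function.support f ⊆ closedBall x0 ρ)
    (hφ : φ ∈ holderClass n α) (ht : 0 < t) (hy : ρ + t < ‖y - x0‖) :
    convDil n f φ t y = 0 := by
  rw [convDil, ← integral_zero (EuclideanSpace ℝ (Fin n)) ℝ]
  congr 1 with z
  by_cases hz : f z = 0
  · simp [hz]
  have hzρ : ‖z - x0‖ ≤ ρ := mem_closedBall_iff_norm.1 (hsupp hz)
  have hfar : 1 < ‖t⁻¹ • (y - z)‖ := by
    rw [norm_smul, norm_inv, Real.norm_of_nonneg ht.le, inv_mul_eq_div, one_lt_div ht]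
    have := norm_sub_le_norm_sub_add_norm_sub y z x0
    linarith
  have : φ (t⁻¹ • (y - z)) = 0 :=
    Function.notMem_support.1 fun h => hfar.not_ge (mem_closedBall_zero_iff.1 (hφ.1 h))
  simp [this]

lemma intA_le (hα : 0 ≤ α) (hρ : 0 ≤ ρ) (hf : Integrable f)
    (hsupp : Function.support f ⊆ closedBall x0 ρ) (hmean : ∫ z, f z = 0) (ht : 0 < t) :
    intA n α f y t ≤ ENNReal.ofReal (ρ ^ α * (∫ z, |f z|) * t ^ (-((n : ℝ) + α))) :=
  iSup₂_le fun _ hφ => ENNReal.ofReal_le_ofReal (abs_convDil_le hα hρ hf hsupp hmean hφ ht)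

lemma intA_eq_zero_of_lt_norm_sub (hsupp : Function.support f ⊆ closedBall x0 ρ)
    (ht : 0 < t) (hy : ρ + t < ‖y - x0‖) : intA n α f y t = 0 := by
  refine le_antisymm (iSup₂_le fun φ hφ => ?_) bot_le
  rw [convDil_eq_zero_of_lt_norm_sub hsupp hφ ht hy, abs_zero, ENNReal.ofReal_zero]

end

lemma lintegral_Ioi_ofReal_rpow_neg_sub_one {s T : ℝ} (hs : 0 < s) (hT : 0 < T) :
    ∫⁻ t in Ioi T, ENNReal.ofReal (t ^ (-(s + 1))) = ENNReal.ofReal (T ^ (-s) / s) := by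
  have hlt : -(s + 1) < -1 := by linarith
  rw [← ofReal_integral_eq_lintegral_ofReal (integrableOn_Ioi_rpow_of_lt hlt hT)
    ((ae_restrict_iff' measurableSet_Ioi).2 (.of_forall fun t ht =>
      Real.rpow_nonneg (hT.trans ht).le _)), integral_Ioi_rpow_of_lt hlt hT]
  congr 1
  rw [show -(s + 1) + 1 = -s by ring, neg_div_neg_eq]

section

variable {n : ℕ} {α β ρ t : ℝ} {f : EuclideanSpace ℝ (Fin n) → ℝ} {x x0 : EuclideanSpace ℝ (Fin n)}

lemma lintegral_ball_intA_sq_le (hα : 0 ≤ α) (hρ : 0 ≤ ρ) (hf : Integrable f)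
    (hsupp : Function.support f ⊆ closedBall x0 ρ) (hmean : ∫ z, f z = 0) (hβ : 0 < β)
    (ht : 0 < t) :
    ∫⁻ y in ball x (β * t), intA n α f y t ^ 2 * (ENNReal.ofReal (t ^ (n + 1)))⁻¹ ≤
      volume (ball (0 : EuclideanSpace ℝ (Fin n)) 1) *
        ENNReal.ofReal (β ^ n * (ρ ^ α * ∫ z, |f z|) ^ 2 * t ^ (-(2 * ((n : ℝ) + α) + 1))) := by
  set M := ρ ^ α * ∫ z, |f z|
  have hM : 0 ≤ M := mul_nonneg (by positivity) (integral_nonneg fun _ => abs_nonneg _)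
  have hpow : t ^ (-(2 * ((n : ℝ) + α) + 1)) =
      (t ^ (-((n : ℝ) + α))) ^ 2 * (t ^ (n + 1))⁻¹ * t ^ n := by
    rw [← Real.rpow_natCast t (n + 1), ← Real.rpow_natCast t n, ← Real.rpow_neg ht.le,
      ← Real.rpow_mul_natCast ht.le, ← Real.rpow_add ht, ← Real.rpow_add ht]
    push_cast
    ring_nf
  calc ∫⁻ y in ball x (β * t), intA n α f y t ^ 2 * (ENNReal.ofReal (t ^ (n + 1)))⁻¹
      ≤ ∫⁻ _ in ball x (β * t),
          ENNReal.ofReal (M * t ^ (-((n : ℝ) + α))) ^ 2 * (ENNReal.ofReal (t ^ (n + 1)))⁻¹ :=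
        setLIntegral_mono' measurableSet_ball fun y _ => by
          gcongr
          exact intA_le hα hρ hf hsupp hmean ht
    _ = ENNReal.ofReal (M * t ^ (-((n : ℝ) + α))) ^ 2 * (ENNReal.ofReal (t ^ (n + 1)))⁻¹ *
          (ENNReal.ofReal ((β * t) ^ n) * volume (ball (0 : EuclideanSpace ℝ (Fin n)) 1)) := by
        rw [setLIntegral_const, Measure.addHaar_ball_of_pos _ _ (by positivity),
          finrank_euclideanSpace_fin]
    _ = volume (ball (0 : EuclideanSpace ℝ (Fin n)) 1) *
          ENNReal.ofReal (β ^ n * M ^ 2 * t ^ (-(2 * ((n : ℝ) + α) + 1))) := by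
        rw [← ENNReal.ofReal_pow (by positivity), ← ENNReal.ofReal_inv_of_pos (by positivity),
          ← ENNReal.ofReal_mul (by positivity), ← mul_assoc, ← ENNReal.ofReal_mul (by positivity),
          mul_comm, hpow, mul_pow]
        ring_nf

lemma lintegral_ball_intA_sq_eq_zero (hsupp : Function.support f ⊆ closedBall x0 ρ)
    (ht : 0 < t) (hfar : ρ + (β + 1) * t ≤ ‖x - x0‖) :
    ∫⁻ y in ball x (β * t), intA n α f y t ^ 2 * (ENNReal.ofReal (t ^ (n + 1)))⁻¹ = 0 := by
  calc _ = ∫⁻ _ in ball x (β * t), (0 : ℝ≥0∞) := setLIntegral_congr_fun measurableSet_ball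
          fun y hy => by
            have hxy : ‖x - y‖ < β * t := by rw [← dist_eq_norm, dist_comm]; exact hy
            have := norm_sub_le_norm_sub_add_norm_sub x y x0
            rw [intA_eq_zero_of_lt_norm_sub hsupp ht (by linarith)]
            simp
    _ = 0 := lintegral_zero

end

section

variable {n : ℕ} {α β ρ : ℝ} {f : EuclideanSpace ℝ (Fin n) → ℝ} {x x0 : EuclideanSpace ℝ (Fin n)}

theorem sFun_sq_le (hα : 0 < α) (hρ : 0 ≤ ρ) (hf : Integrable f)
    (hsupp : Function.support f ⊆ closedBall x0 ρ) (hmean : ∫ z, f z = 0) (hβ : 0 < β)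
    {T : ℝ} (hT : 0 < T) (hfar : ρ + (β + 1) * T ≤ ‖x - x0‖) :
    sFun n α β f x ^ 2 ≤ volume (ball (0 : EuclideanSpace ℝ (Fin n)) 1) *
      ENNReal.ofReal (β ^ n * (ρ ^ α * ∫ z, |f z|) ^ 2 *
        (T ^ (-(2 * ((n : ℝ) + α))) / (2 * ((n : ℝ) + α)))) := by
  set s := 2 * ((n : ℝ) + α)
  set K := β ^ n * (ρ ^ α * ∫ z, |f z|) ^ 2
  have hs : 0 < s := by positivity
  have hK : 0 ≤ K := by positivity
  have hsq : sFun n α β f x ^ 2 = ∫⁻ t in Ioi 0, ∫⁻ y in ball x (β * t),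
      intA n α f y t ^ 2 * (ENNReal.ofReal (t ^ (n + 1)))⁻¹ := by
    rw [sFun, ← ENNReal.rpow_natCast, ← ENNReal.rpow_mul]
    norm_num
  have hslice : ∀ t ∈ Ioi (0 : ℝ), ∫⁻ y in ball x (β * t),
      intA n α f y t ^ 2 * (ENNReal.ofReal (t ^ (n + 1)))⁻¹ ≤
        (Ioi T).indicator (fun t => volume (ball (0 : EuclideanSpace ℝ (Fin n)) 1) *
          ENNReal.ofReal (K * t ^ (-(s + 1)))) t := by
    intro t ht
    by_cases htT : t ∈ Ioi T
    · rw [indicator_of_mem htT]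
      exact lintegral_ball_intA_sq_le hα.le hρ hf hsupp hmean hβ ht
    · rw [indicator_of_notMem htT, lintegral_ball_intA_sq_eq_zero hsupp ht
        (le_trans (by gcongr; exact not_lt.1 htT) hfar)]
  calc sFun n α β f x ^ 2
      ≤ ∫⁻ t in Ioi 0, (Ioi T).indicator (fun t => volume (ball (0 : EuclideanSpace ℝ (Fin n)) 1) *
          ENNReal.ofReal (K * t ^ (-(s + 1)))) t :=
        hsq ▸ setLIntegral_mono' measurableSet_Ioi hslice
    _ = volume (ball (0 : EuclideanSpace ℝ (Fin n)) 1) * ENNReal.ofReal K *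
          ∫⁻ t in Ioi T, ENNReal.ofReal (t ^ (-(s + 1))) := by
        rw [lintegral_indicator measurableSet_Ioi, Measure.restrict_restrict measurableSet_Ioi,
          inter_eq_self_of_subset_left (Ioi_subset_Ioi hT.le)]
        simp_rw [ENNReal.ofReal_mul hK]
        rw [lintegral_const_mul' _ _ measure_ball_lt_top.ne, lintegral_const_mul' _ _
          ENNReal.ofReal_ne_top, mul_assoc]
    _ = _ := by
        rw [lintegral_Ioi_ofReal_rpow_neg_sub_one hs hT, mul_assoc, ← ENNReal.ofReal_mul hK]

theorem sFun_sq_le_of_two_mul_lt (hα : 0 < α) (hρ : 0 ≤ ρ) (hf : Integrable f)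
    (hsupp : Function.support f ⊆ closedBall x0 ρ) (hmean : ∫ z, f z = 0) (hβ : 1 ≤ β)
    (hfar : 2 * ρ < ‖x - x0‖) :
    sFun n α β f x ^ 2 ≤ volume (ball (0 : EuclideanSpace ℝ (Fin n)) 1) *
      ENNReal.ofReal (4 ^ (2 * ((n : ℝ) + α)) / (2 * ((n : ℝ) + α)) *
        β ^ (3 * (n : ℝ) + 2 * α) * (ρ ^ α * ∫ z, |f z|) ^ 2 /
          ‖x - x0‖ ^ (2 * ((n : ℝ) + α))) := by
  have hX : 0 < ‖x - x0‖ := by linarith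
  have hβ0 : 0 < β := by linarith
  refine (sFun_sq_le hα hρ hf hsupp hmean hβ0 (T := ‖x - x0‖ / (4 * β)) (by positivity)
    ?_).trans_eq ?_
  · have : (β + 1) * (‖x - x0‖ / (4 * β)) ≤ ‖x - x0‖ / 2 := by
      rw [mul_div_assoc', div_le_div_iff₀ (by positivity) two_pos]
      nlinarith
    linarith
  · congr 2
    rw [Real.rpow_neg (by positivity), Real.div_rpow hX.le (by positivity), inv_div,
      Real.mul_rpow (by norm_num) hβ0.le, show 3 * (n : ℝ) + 2 * α = n + 2 * (n + α) by ring,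
      Real.rpow_add hβ0, Real.rpow_natCast]
    ring

end

lemma rpow_mul_sq_le_of_le_rpow {n : ℕ} {α p r W L : ℝ} (hr : 0 < r) (hW : 0 < W)
    (hL0 : 0 ≤ L) (hL : L ≤ r ^ n * W ^ (-(1 / p))) :
    ((√n * (r / 2)) ^ α * L) ^ 2 ≤
      (√n / 2) ^ (2 * α) * (r ^ (2 * ((n : ℝ) + α)) / W ^ (2 / p)) := by
  have hsq : ((√n * (r / 2)) ^ α) ^ 2 = (√n / 2) ^ (2 * α) * r ^ (2 * α) := by
    rw [show √(n : ℝ) * (r / 2) = √n / 2 * r by ring, Real.mul_rpow (by positivity) hr.le,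
      mul_pow, ← Real.rpow_mul_natCast (by positivity), ← Real.rpow_mul_natCast hr.le]
    push_cast
    ring_nf
  have hW' : (W ^ (-(1 / p))) ^ 2 = (W ^ (2 / p))⁻¹ := by
    rw [← Real.rpow_mul_natCast hW.le, ← Real.rpow_neg hW.le]
    ring_nf
  calc ((√n * (r / 2)) ^ α * L) ^ 2 ≤ ((√n * (r / 2)) ^ α * (r ^ n * W ^ (-(1 / p)))) ^ 2 := by
        gcongr
    _ = (√n / 2) ^ (2 * α) * (r ^ (2 * ((n : ℝ) + α)) / W ^ (2 / p)) := by
        rw [mul_pow, mul_pow, hsq, hW', ← pow_mul, ← Real.rpow_natCast,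
          show 2 * ((n : ℝ) + α) = 2 * α + ((n * 2 : ℕ) : ℝ) by push_cast; ring,
          Real.rpow_add hr]
        ring

theorem sFun_dyadic_atom_decay_general (n : ℕ) (hn : 1 ≤ n) (α : ℝ) (hα0 : 0 < α)
    (p : ℝ) (w : EuclideanSpace ℝ (Fin n) → ℝ) :
    ∃ C > 0, ∀ (a : EuclideanSpace ℝ (Fin n) → ℝ) (x0 : EuclideanSpace ℝ (Fin n)) (r : ℝ)
      (x : EuclideanSpace ℝ (Fin n)) (k : ℕ),
      1 ≤ k → 0 < r →
      MeasureTheory.Integrable a volume →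
      Function.support a ⊆ cube n x0 r →
      (∫ y, a y) = 0 →
      0 < (∫ y in cube n x0 r, w y) →
      (∫ y in cube n x0 r, |a y|) ≤ r ^ n * (∫ y in cube n x0 r, w y) ^ (-(1 / p)) →
      x ∉ cube n x0 (2 * Real.sqrt n * r) →
      (sFun n α ((2 : ℝ) ^ k) a x) ^ 2 ≤
        ENNReal.ofReal (C * (2 : ℝ) ^ ((k : ℝ) * (3 * n + 2 * α)) *
          (r ^ (2 * ((n : ℝ) + α)) /
            ((∫ y in cube n x0 r, w y) ^ (2 / p) * ‖x - x0‖ ^ (2 * ((n : ℝ) + α))))) := by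
  set B := volume (ball (0 : EuclideanSpace ℝ (Fin n)) 1)
  set s := 2 * ((n : ℝ) + α)
  have hB : 0 < B.toReal :=
    ENNReal.toReal_pos (measure_ball_pos _ _ one_pos).ne' measure_ball_lt_top.ne
  have hsqrt : 0 < √(n : ℝ) := Real.sqrt_pos.2 (by exact_mod_cast hn)
  refine ⟨B.toReal * (√n / 2) ^ (2 * α) * 4 ^ s / s, by positivity, ?_⟩
  intro a x0 r x k _ hr ha hsupp hmean hwQ hatom hx
  have hL : ∫ z, |a z| = ∫ z in cube n x0 r, |a z| :=
    (setIntegral_eq_integral_of_forall_compl_eq_zero fun z hz => by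
      rw [Function.notMem_support.1 fun h => hz (hsupp h), abs_zero]).symm
  have hM := rpow_mul_sq_le_of_le_rpow (α := α) hr hwQ
    (integral_nonneg fun _ => abs_nonneg _) hatom
  refine (sFun_sq_le_of_two_mul_lt hα0 (by positivity) ha
    (hsupp.trans (cube_subset_closedBall x0 hr.le)) hmean (one_le_pow₀ one_le_two)
    (by linarith [sqrt_mul_lt_norm_sub_of_notMem_cube hx])).trans ?_
  rw [← ENNReal.ofReal_toReal measure_ball_lt_top.ne, ← ENNReal.ofReal_mul hB.le,
    ← Real.rpow_natCast, ← Real.rpow_mul zero_le_two, hL]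
  gcongr ENNReal.ofReal ?_
  calc _ = B.toReal * 4 ^ s / s * 2 ^ ((k : ℝ) * (3 * n + 2 * α)) / ‖x - x0‖ ^ s *
        ((√n * (r / 2)) ^ α * ∫ z in cube n x0 r, |a z|) ^ 2 := by ring
    _ ≤ B.toReal * 4 ^ s / s * 2 ^ ((k : ℝ) * (3 * n + 2 * α)) / ‖x - x0‖ ^ s *
        ((√n / 2) ^ (2 * α) * (r ^ s / (∫ y in cube n x0 r, w y) ^ (2 / p))) := by gcongr
    _ = _ := by field_simp

/-- Decay of the aperture-`2^k` square function of an atom outside the expanded cube. -/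
theorem sFun_dyadic_atom_decay (n : ℕ) (hn : 1 ≤ n) (α : ℝ) (hα0 : 0 < α) (hα1 : α < 1)
    (p : ℝ) (hpdef : p = n / (n + α))
    (w : EuclideanSpace ℝ (Fin n) → ℝ) (hw : ∀ x, 0 ≤ w x)
    (hloc : MeasureTheory.LocallyIntegrable w volume) :
    ∃ C > 0, ∀ (a : EuclideanSpace ℝ (Fin n) → ℝ) (x0 : EuclideanSpace ℝ (Fin n)) (r : ℝ)
      (x : EuclideanSpace ℝ (Fin n)) (k : ℕ),
      1 ≤ k → 0 < r →
      MeasureTheory.Integrable a volume →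
      Function.support a ⊆ cube n x0 r →
      (∫ y, a y) = 0 →
      0 < (∫ y in cube n x0 r, w y) →
      (∫ y in cube n x0 r, |a y|) ≤ r ^ n * (∫ y in cube n x0 r, w y) ^ (-(1 / p)) →
      x ∉ cube n x0 (2 * Real.sqrt n * r) →
      (sFun n α ((2 : ℝ) ^ k) a x) ^ 2 ≤
        ENNReal.ofReal (C * (2 : ℝ) ^ ((k : ℝ) * (3 * n + 2 * α)) *
          (r ^ (2 * ((n : ℝ) + α)) /
            ((∫ y in cube n x0 r, w y) ^ (2 / p) * ‖x - x0‖ ^ (2 * ((n : ℝ) + α))))) :=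
  sFun_dyadic_atom_decay_general n hn α hα0 p w
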